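/- (Theorem 2, case α = ∞.) For all x, x' ∈ [−C_q/2, C_q/2] and every r ∈ {0,1,…,k−1}, the likelihood ratio of the quantized-Gaussian pmfs satisfies log(P_x(r)/P_{x'}(r)) ≤ log( δ / ∫_{B(k−2)}^{B(k−1)} f_{−C_q/2}(t)·(t−B(k−2)) dt ); equivalently, P_x(r) ≤ (δ / ∫_{B(k−2)}^{B(k−1)} f_{−C_q/2}(t)·(t−B(k−2)) dt)·P_{x'}(r). -/

import Mathlib

open MeasureTheory Real

/-- Density of the normal distribution `N(x, σ²)`. -/
noncomputable def gpdf (σ x t : ℝ) : ℝ :=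
  (1 / (σ * Real.sqrt (2 * Real.pi))) * Real.exp (-(t - x) ^ 2 / (2 * σ ^ 2))

/-- Quantization levels `B(r) = -C_q + r · δ`, with `δ = 2·C_q/(k-1)`. -/
noncomputable def Blev (Cq : ℝ) (k : ℕ) (r : ℕ) : ℝ :=
  -Cq + (r : ℝ) * (2 * Cq / ((k : ℝ) - 1))

/-- The quantized-Gaussian pmf `P_x(r)` on `{0, 1, …, k-1}`. -/
noncomputable def qgPmf (Cq σ : ℝ) (k : ℕ) (x : ℝ) (r : ℕ) : ℝ :=
  if r = 0 then
    (∫ t in Set.Iic (Blev Cq k 0), gpdf σ x t)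
      + ∫ t in (Blev Cq k 0)..(Blev Cq k 1),
          gpdf σ x t * (Blev Cq k 1 - t) / (2 * Cq / ((k : ℝ) - 1))
  else if r = k - 1 then
    (∫ t in (Blev Cq k (k - 2))..(Blev Cq k (k - 1)),
        gpdf σ x t * (t - Blev Cq k (k - 2)) / (2 * Cq / ((k : ℝ) - 1)))
      + ∫ t in Set.Ici (Blev Cq k (k - 1)), gpdf σ x t
  else
    (∫ t in (Blev Cq k (r - 1))..(Blev Cq k r),
        gpdf σ x t * (t - Blev Cq k (r - 1)) / (2 * Cq / ((k : ℝ) - 1)))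
      + ∫ t in (Blev Cq k r)..(Blev Cq k (r + 1)),
          gpdf σ x t * (Blev Cq k (r + 1) - t) / (2 * Cq / ((k : ℝ) - 1))

/-!
`δ · P_m(r)` is the integral of `f_m` against the hat `(δ - |t - B(r)|)⁺`, except that at
`r = 0` and `r = k - 1` the outer half of the hat is replaced by the whole tail, which only adds
mass; and `P_m(r) ≤ 1`. Writing `(δ - |u|)⁺ = ∫₀^δ 1{|u| ≤ s} ds` turns the hat integral into an
integral over `s` of the Gaussian masses of the windows `[B(r) - s, B(r) + s]`. As the Gaussian
density is symmetric and decreasing in `|t - m|`, these masses decrease as `|B(r) - m|` grows.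
For `m ∈ [-C_q/2, C_q/2]` we have `|B(r) - m| ≤ 3C_q/2 = |C_q - (-C_q/2)|`, so `P_m(r)` is at
least the hat integral at centre `C_q` and mean `-C_q/2` divided by `δ`, hence at least `I/δ`,
where `I` is the left half of that hat integral. Thus `P_x(r)/P_{x'}(r) ≤ 1/(I/δ) = δ/I`.
-/

open Set

/-- `∫ f(t) (d - |t - c|)⁺ dt`, split at the apex `c`. -/
noncomputable def tentIntegral (f : ℝ → ℝ) (c d : ℝ) : ℝ :=
  (∫ t in c - d..c, f t * (t - (c - d))) + ∫ t in c..c + d, f t * (c + d - t)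

section Tent

variable {f : ℝ → ℝ}

lemma continuous_integral_of_continuous_bounds (hf : Continuous f) {u v : ℝ → ℝ}
    (hu : Continuous u) (hv : Continuous v) : Continuous fun s => ∫ t in u s..v s, f t := by
  have hP := intervalIntegral.continuous_primitive (μ := volume)
    (fun _ _ => hf.intervalIntegrable _ _) 0
  have h : (fun s => ∫ t in u s..v s, f t) = fun s => (∫ t in 0..v s, f t) - ∫ t in 0..u s, f t :=
    funext fun s => (intervalIntegral.integral_interval_sub_left
      (hf.intervalIntegrable _ _) (hf.intervalIntegrable _ _)).symm
  rw [h]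
  exact (hP.comp hv).sub (hP.comp hu)

lemma integral_mul_rampUp (hf : Continuous f) (c d : ℝ) :
    ∫ t in c - d..c, f t * (t - (c - d)) = ∫ s in 0..d, ∫ t in c - s..c, f t := by
  have hparts := intervalIntegral.integral_mul_deriv_eq_deriv_mul (a := c - d) (b := c)
    (fun x _ => (hasDerivAt_id x).sub_const (c - d))
    (fun x _ => (hf.integral_hasStrictDerivAt c x).hasDerivAt) intervalIntegrable_const
    (hf.intervalIntegrable _ _)
  conv_rhs => enter [1, s]; rw [intervalIntegral.integral_symm]
  rw [intervalIntegral.integral_comp_sub_left (fun y => -∫ t in c..y, f t) c]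
  simpa [mul_comm, intervalIntegral.integral_neg] using hparts

lemma integral_mul_rampDown (hf : Continuous f) (c d : ℝ) :
    ∫ t in c..c + d, f t * (c + d - t) = ∫ s in 0..d, ∫ t in c..c + s, f t := by
  have hramp : ∀ x, HasDerivAt (fun t => c + d - t) (-1) x := fun x => by
    simpa using (hasDerivAt_id x).const_sub (c + d)
  have hparts := intervalIntegral.integral_mul_deriv_eq_deriv_mul (a := c) (b := c + d)
    (fun x _ => hramp x) (fun x _ => (hf.integral_hasStrictDerivAt c x).hasDerivAt)
    intervalIntegrable_const (hf.intervalIntegrable _ _)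
  rw [intervalIntegral.integral_comp_add_left (fun y => ∫ t in c..y, f t) c]
  simpa [mul_comm] using hparts

lemma tentIntegral_eq_integral_integral (hf : Continuous f) (c d : ℝ) :
    tentIntegral f c d = ∫ s in 0..d, ∫ t in c - s..c + s, f t := by
  rw [tentIntegral, integral_mul_rampUp hf, integral_mul_rampDown hf,
    ← intervalIntegral.integral_add
      ((continuous_integral_of_continuous_bounds hf (continuous_sub_left c)
        continuous_const).intervalIntegrable _ _)
      ((continuous_integral_of_continuous_bounds hf continuous_const
        (continuous_const_add c)).intervalIntegrable _ _)]
  simp only [intervalIntegral.integral_add_adjacent_intervals (hf.intervalIntegrable _ _)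
    (hf.intervalIntegrable _ _)]

lemma integral_window_le_of_abs_le (hf : Continuous f) (hmono : ∀ s t, |s| ≤ |t| → f t ≤ f s)
    {s a b : ℝ} (hs : 0 ≤ s) (hab : |a| ≤ |b|) :
    ∫ t in b - s..b + s, f t ≤ ∫ t in a - s..a + s, f t := by
  have hneg : ∀ t, f (-t) = f t := fun t =>
    le_antisymm (hmono _ _ (abs_neg t).ge) (hmono _ _ (abs_neg t).le)
  have habs : ∀ a, ∫ t in a - s..a + s, f t = ∫ t in |a| - s..|a| + s, f t := fun a => by
    rcases abs_cases a with ⟨h, -⟩ | ⟨h, -⟩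
    · rw [h]
    · rw [h, show -a - s = -(a + s) by ring, show -a + s = -(a - s) by ring,
        ← intervalIntegral.integral_comp_neg]
      simp only [hneg]
  have hmono_nonneg : ∀ a b, 0 ≤ a → a ≤ b →
      ∫ t in b - s..b + s, f t ≤ ∫ t in a - s..a + s, f t := by
    intro a b ha hab
    -- moving the centre from `a` to `b` gains `[a + s, b + s]` and loses `[a - s, b - s]`,
    -- and `|t - s| ≤ t + s` for `t ≥ 0`
    rw [← sub_nonneg, intervalIntegral.integral_interval_sub_interval_comm
      (hf.intervalIntegrable _ _) (hf.intervalIntegrable _ _) (hf.intervalIntegrable _ _),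
      sub_nonneg, ← intervalIntegral.integral_comp_sub_right,
      ← intervalIntegral.integral_comp_add_right]
    refine intervalIntegral.integral_mono_on hab
      ((hf.comp (continuous_add_const s)).intervalIntegrable _ _)
      ((hf.comp (continuous_sub_right s)).intervalIntegrable _ _) fun t ht => hmono _ _ ?_
    rw [abs_of_nonneg (by linarith [ht.1] : 0 ≤ t + s)]
    exact abs_le.2 ⟨by linarith [ht.1], by linarith⟩
  rw [habs a, habs b]
  exact hmono_nonneg _ _ (abs_nonneg a) hab

lemma tentIntegral_comp_sub_le (hf : Continuous f) (hmono : ∀ s t, |s| ≤ |t| → f t ≤ f s)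
    {c c' m m' d : ℝ} (hd : 0 ≤ d) (h : |c - m| ≤ |c' - m'|) :
    tentIntegral (fun t => f (t - m')) c' d ≤ tentIntegral (fun t => f (t - m)) c d := by
  have hwin : ∀ c m, Continuous fun s => ∫ t in c - s..c + s, f (t - m) := fun c m =>
    continuous_integral_of_continuous_bounds (hf.comp (continuous_sub_right m))
      (continuous_sub_left c) (continuous_const_add c)
  rw [tentIntegral_eq_integral_integral (f := fun t => f (t - m')) (by fun_prop),
    tentIntegral_eq_integral_integral (f := fun t => f (t - m)) (by fun_prop)]
  refine intervalIntegral.integral_mono_on hd ((hwin _ _).intervalIntegrable _ _)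
    ((hwin _ _).intervalIntegrable _ _) fun s hs => ?_
  simp only [intervalIntegral.integral_comp_sub_right fun t => f t, sub_right_comm _ s,
    add_sub_right_comm _ s]
  exact integral_window_le_of_abs_le hf hmono hs.1 h

lemma integral_mul_le_setIntegral_Ioc {w : ℝ → ℝ} (hf : Continuous f) (hw : Continuous w)
    (hf0 : ∀ t, 0 ≤ f t) {a b : ℝ} (hab : a ≤ b) (hw1 : ∀ t ∈ Icc a b, w t ≤ 1) :
    ∫ t in a..b, f t * w t ≤ ∫ t in Ioc a b, f t := by
  rw [← intervalIntegral.integral_of_le hab]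
  exact intervalIntegral.integral_mono_on hab ((hf.mul hw).intervalIntegrable _ _)
    (hf.intervalIntegrable _ _) fun t ht => mul_le_of_le_one_right (hf0 t) (hw1 t ht)

lemma integral_rampUp_div_le (hf : Continuous f) (hf0 : ∀ t, 0 ≤ f t) {d : ℝ} (hd : 0 < d)
    (c : ℝ) : (∫ t in c - d..c, f t * (t - (c - d))) / d ≤ ∫ t in Ioc (c - d) c, f t := by
  rw [← intervalIntegral.integral_div]
  simp only [mul_div_assoc]
  refine integral_mul_le_setIntegral_Ioc hf (by fun_prop) hf0 (by linarith) fun t ht => ?_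
  rw [div_le_one hd]
  linarith [ht.2]

lemma integral_rampDown_div_le (hf : Continuous f) (hf0 : ∀ t, 0 ≤ f t) {d : ℝ} (hd : 0 < d)
    (c : ℝ) : (∫ t in c..c + d, f t * (c + d - t)) / d ≤ ∫ t in Ioc c (c + d), f t := by
  rw [← intervalIntegral.integral_div]
  simp only [mul_div_assoc]
  refine integral_mul_le_setIntegral_Ioc hf (by fun_prop) hf0 (by linarith) fun t ht => ?_
  rw [div_le_one hd]
  linarith [ht.1]

lemma integral_mul_sub_pos (hf : Continuous f) (hpos : ∀ t, 0 < f t) {a b : ℝ}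
    (hab : a < b) : 0 < ∫ t in a..b, f t * (t - a) :=
  intervalIntegral.intervalIntegral_pos_of_pos_on ((hf.mul (by fun_prop)).intervalIntegrable _ _)
    (fun t ht => mul_pos (hpos t) (sub_pos.2 ht.1)) hab

lemma integral_rampUp_le_tentIntegral (hf0 : ∀ t, 0 ≤ f t) (c : ℝ) {d : ℝ}
    (hd : 0 ≤ d) : ∫ t in c - d..c, f t * (t - (c - d)) ≤ tentIntegral f c d :=
  le_add_of_nonneg_right <| intervalIntegral.integral_nonneg (by linarith) fun t ht =>
    mul_nonneg (hf0 t) (by linarith [ht.2])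

end Tent

lemma setIntegral_add_setIntegral_le_integral {α : Type*} [MeasurableSpace α] {μ : Measure α}
    {f : α → ℝ} (hf : Integrable f μ) (hf0 : 0 ≤ᵐ[μ] f) {s t : Set α} (hst : Disjoint s t)
    (ht : MeasurableSet t) : (∫ x in s, f x ∂μ) + ∫ x in t, f x ∂μ ≤ ∫ x, f x ∂μ := by
  rw [← setIntegral_union hst ht hf.integrableOn hf.integrableOn]
  exact setIntegral_le_integral hf hf0

section Gaussian

variable {σ : ℝ}

lemma continuous_gpdf (σ m : ℝ) : Continuous (gpdf σ m) := by
  unfold gpdf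
  fun_prop

lemma gpdf_pos (hσ : 0 < σ) (m t : ℝ) : 0 < gpdf σ m t := by
  unfold gpdf
  have := pi_pos
  positivity

lemma gpdf_eq_comp_sub (σ m : ℝ) : gpdf σ m = fun t => gpdf σ 0 (t - m) := by
  ext t
  simp [gpdf]

lemma gpdf_zero_le_of_abs_le (hσ : 0 < σ) {s t : ℝ} (h : |s| ≤ |t|) :
    gpdf σ 0 t ≤ gpdf σ 0 s := by
  have := pi_pos
  unfold gpdf
  gcongr _ * exp (-?_ / _)
  simpa only [sub_zero] using sq_le_sq.2 h

lemma gpdf_eq_gaussianPDFReal (hσ : 0 < σ) (m : ℝ) :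
    gpdf σ m = ProbabilityTheory.gaussianPDFReal m (σ ^ 2).toNNReal := by
  ext t
  rw [gpdf, ProbabilityTheory.gaussianPDFReal_def, one_div, coe_toNNReal _ (sq_nonneg σ),
    sqrt_mul' _ (sq_nonneg σ), sqrt_sq hσ.le, mul_comm σ]

lemma integrable_gpdf (hσ : 0 < σ) (m : ℝ) : Integrable (gpdf σ m) := by
  rw [gpdf_eq_gaussianPDFReal hσ]
  exact ProbabilityTheory.integrable_gaussianPDFReal _ _

lemma integral_gpdf (hσ : 0 < σ) (m : ℝ) : ∫ t, gpdf σ m t = 1 := by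
  rw [gpdf_eq_gaussianPDFReal hσ]
  exact ProbabilityTheory.integral_gaussianPDFReal_eq_one m (by simp [hσ.ne'])

lemma tentIntegral_gpdf_le (hσ : 0 < σ) {c c' m m' d : ℝ} (hd : 0 ≤ d)
    (h : |c - m| ≤ |c' - m'|) : tentIntegral (gpdf σ m') c' d ≤ tentIntegral (gpdf σ m) c d := by
  rw [gpdf_eq_comp_sub σ m, gpdf_eq_comp_sub σ m']
  exact tentIntegral_comp_sub_le (continuous_gpdf σ 0)
    (fun _ _ => gpdf_zero_le_of_abs_le hσ) hd h

end Gaussian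

section Quantizer

variable {Cq σ : ℝ} {k : ℕ}

local notation "δ" => 2 * Cq / ((k : ℝ) - 1)

lemma step_pos (hC : 0 < Cq) (hk : 2 ≤ k) : 0 < δ := by
  have : (2 : ℝ) ≤ k := by exact_mod_cast hk
  exact div_pos (by linarith) (by linarith)

lemma Blev_succ (r : ℕ) : Blev Cq k (r + 1) = Blev Cq k r + δ := by
  simp only [Blev, Nat.cast_succ]
  ring

lemma Blev_pred {r : ℕ} (hr : 1 ≤ r) : Blev Cq k (r - 1) = Blev Cq k r - δ := by
  rw [eq_sub_iff_add_eq, ← Blev_succ, Nat.sub_add_cancel hr]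

lemma Blev_last (hk : 2 ≤ k) : Blev Cq k (k - 1) = Cq := by
  have : (k : ℝ) - 1 ≠ 0 := by
    rw [sub_ne_zero]
    exact_mod_cast (by omega : k ≠ 1)
  rw [Blev, Nat.cast_sub (by omega), Nat.cast_one, mul_div_cancel₀ _ this]
  ring

lemma Blev_sub_two (hk : 2 ≤ k) : Blev Cq k (k - 2) = Cq - δ := by
  rw [show k - 2 = k - 1 - 1 by omega, Blev_pred (by omega), Blev_last hk]

lemma Blev_mem_Icc (hC : 0 < Cq) (hk : 2 ≤ k) {r : ℕ} (hr : r < k) :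
    Blev Cq k r ∈ Icc (-Cq) Cq := by
  have hmono : Monotone (Blev Cq k) := monotone_nat_of_le_succ fun r => by
    rw [Blev_succ]
    linarith [step_pos hC hk]
  constructor
  · simpa [Blev] using hmono (Nat.zero_le r)
  · simpa only [Blev_last hk] using hmono (Nat.le_sub_one_of_lt hr)

lemma tentIntegral_div_le_qgPmf (hC : 0 < Cq) (hσ : 0 < σ) (hk : 2 ≤ k) {r : ℕ} (hr : r < k)
    (m : ℝ) : tentIntegral (gpdf σ m) (Blev Cq k r) δ / δ ≤ qgPmf Cq σ k m r := by
  have hδ := step_pos hC hk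
  have hf := continuous_gpdf σ m
  have hf0 t := (gpdf_pos hσ m t).le
  have hmass {s s' : Set ℝ} (h : s ⊆ s') : ∫ t in s, gpdf σ m t ≤ ∫ t in s', gpdf σ m t :=
    setIntegral_mono_set (integrable_gpdf hσ m).integrableOn
      (Filter.Eventually.of_forall hf0) h.eventuallyLE
  rw [tentIntegral, add_div]
  obtain rfl | hr0 := eq_or_ne r 0
  · rw [qgPmf, if_pos rfl, show Blev Cq k 1 = _ from Blev_succ 0, intervalIntegral.integral_div]
    gcongr
    exact (integral_rampUp_div_le hf hf0 hδ _).trans (hmass Ioc_subset_Iic_self)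
  obtain rfl | hrk := eq_or_ne r (k - 1)
  · rw [qgPmf, if_neg hr0, if_pos rfl, Blev_sub_two hk, Blev_last hk,
      intervalIntegral.integral_div]
    gcongr
    exact (integral_rampDown_div_le hf hf0 hδ _).trans
      (hmass (Ioc_subset_Ioi_self.trans Ioi_subset_Ici_self))
  · rw [qgPmf, if_neg hr0, if_neg hrk, Blev_pred (by omega), Blev_succ,
      intervalIntegral.integral_div, intervalIntegral.integral_div]

lemma qgPmf_le_one (hC : 0 < Cq) (hσ : 0 < σ) (hk : 2 ≤ k) {r : ℕ} (hr : r < k) (m : ℝ) :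
    qgPmf Cq σ k m r ≤ 1 := by
  have hδ := step_pos hC hk
  have hf := continuous_gpdf σ m
  have hf0 t := (gpdf_pos hσ m t).le
  have hsum {s s' : Set ℝ} (h : Disjoint s s') (hs' : MeasurableSet s') :
      (∫ t in s, gpdf σ m t) + ∫ t in s', gpdf σ m t ≤ 1 :=
    (integral_gpdf hσ m).subst (motive := fun a => _ ≤ a) <|
      setIntegral_add_setIntegral_le_integral (integrable_gpdf hσ m)
        (Filter.Eventually.of_forall hf0) h hs'
  obtain rfl | hr0 := eq_or_ne r 0
  · rw [qgPmf, if_pos rfl, show Blev Cq k 1 = _ from Blev_succ 0, intervalIntegral.integral_div]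
    exact (add_le_add le_rfl (integral_rampDown_div_le hf hf0 hδ _)).trans
      (hsum (Iic_disjoint_Ioc le_rfl) measurableSet_Ioc)
  obtain rfl | hrk := eq_or_ne r (k - 1)
  · rw [qgPmf, if_neg hr0, if_pos rfl, Blev_sub_two hk, Blev_last hk,
      intervalIntegral.integral_div, integral_Ici_eq_integral_Ioi]
    exact (add_le_add (integral_rampUp_div_le hf hf0 hδ _) le_rfl).trans
      (hsum (Ioc_disjoint_Ioi le_rfl) measurableSet_Ioi)
  · rw [qgPmf, if_neg hr0, if_neg hrk, Blev_pred (by omega), Blev_succ,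
      intervalIntegral.integral_div, intervalIntegral.integral_div]
    exact (add_le_add (integral_rampUp_div_le hf hf0 hδ _)
      (integral_rampDown_div_le hf hf0 hδ _)).trans
      (hsum (Ioc_disjoint_Ioc_of_le le_rfl) measurableSet_Ioc)

lemma integral_lastRampUp_div_le_qgPmf (hC : 0 < Cq) (hσ : 0 < σ) (hk : 2 ≤ k) {r : ℕ}
    (hr : r < k) {m : ℝ} (hm : m ∈ Icc (-(Cq / 2)) (Cq / 2)) :
    (∫ t in Blev Cq k (k - 2)..Blev Cq k (k - 1),
      gpdf σ (-(Cq / 2)) t * (t - Blev Cq k (k - 2))) / δ ≤ qgPmf Cq σ k m r := by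
  have hδ := step_pos hC hk
  obtain ⟨hB, hB'⟩ := Blev_mem_Icc hC hk hr
  have hdist : |Blev Cq k r - m| ≤ |Cq - -(Cq / 2)| := by
    rw [abs_of_pos (a := Cq - -(Cq / 2)) (by linarith)]
    exact abs_le.2 ⟨by linarith [hm.2], by linarith [hm.1]⟩
  rw [Blev_sub_two hk, Blev_last hk]
  calc _ ≤ tentIntegral (gpdf σ (-(Cq / 2))) Cq δ / δ := by
        gcongr
        exact integral_rampUp_le_tentIntegral (fun t => (gpdf_pos hσ _ t).le) Cq hδ.le
    _ ≤ tentIntegral (gpdf σ m) (Blev Cq k r) δ / δ := by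
        gcongr
        exact tentIntegral_gpdf_le hσ hδ.le hdist
    _ ≤ qgPmf Cq σ k m r := tentIntegral_div_le_qgPmf hC hσ hk hr m

end Quantizer

/-- Theorem 2, case `α = ∞`: for all `x, x' ∈ [-C_q/2, C_q/2]` and every
`r ∈ {0, …, k-1}`, the log-likelihood ratio of the quantized-Gaussian pmfs is bounded
by `log(δ / ∫_{B(k-2)}^{B(k-1)} f_{-C_q/2}(t)·(t - B(k-2)) dt)`. -/
theorem quantGauss_max_divergence_bound (Cq σ : ℝ) (hC : 0 < Cq) (hσ : 0 < σ)
    (k : ℕ) (hk : 2 ≤ k) (x x' : ℝ)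
    (hx : x ∈ Set.Icc (-(Cq / 2)) (Cq / 2)) (hx' : x' ∈ Set.Icc (-(Cq / 2)) (Cq / 2))
    (r : ℕ) (hr : r < k) :
    Real.log (qgPmf Cq σ k x r / qgPmf Cq σ k x' r)
      ≤ Real.log ((2 * Cq / ((k : ℝ) - 1)) /
          ∫ t in (Blev Cq k (k - 2))..(Blev Cq k (k - 1)),
            gpdf σ (-(Cq / 2)) t * (t - Blev Cq k (k - 2))) := by
  set I := ∫ t in (Blev Cq k (k - 2))..(Blev Cq k (k - 1)),
    gpdf σ (-(Cq / 2)) t * (t - Blev Cq k (k - 2))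
  have hδ := step_pos hC hk
  have hI : 0 < I / (2 * Cq / ((k : ℝ) - 1)) := by
    refine div_pos (integral_mul_sub_pos (continuous_gpdf σ _) (gpdf_pos hσ _) ?_) hδ
    rw [Blev_sub_two hk, Blev_last hk]
    linarith
  have hlow := fun m (hm : m ∈ Icc (-(Cq / 2)) (Cq / 2)) =>
    integral_lastRampUp_div_le_qgPmf hC hσ hk hr hm
  refine log_le_log (div_pos (hI.trans_le (hlow x hx)) (hI.trans_le (hlow x' hx'))) ?_
  calc qgPmf Cq σ k x r / qgPmf Cq σ k x' r ≤ 1 / (I / (2 * Cq / ((k : ℝ) - 1))) :=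
        div_le_div₀ zero_le_one (qgPmf_le_one hC hσ hk hr x) hI (hlow x' hx')
    _ = (2 * Cq / ((k : ℝ) - 1)) / I := one_div_div _ _
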